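/- arXiv:1301.4946 — 7 statements merged into one kernel-verified Lean document; each statement's English description precedes it below -/
import Mathlib

section
/- Let G₁ and G₂ be looped simple graphs on the same vertex set V, with adjacency matrices A₁, A₂ over GF(2). If for every vertex v and every type ι∈{φ,χ,ψ} the column of IAS(G₁)=(I|A₁|I+A₁) indexed by (v,ι) determines the same fundamental-circuit data as the corresponding column of IAS(G₂), i.e. if the identity map on the ground set V×{φ,χ,ψ} is an isomorphism of the binary matroids M(IAS(G₁)) and M(IAS(G₂)), then A₁ = A₂, i.e. G₁ = G₂. -/
/-- The three column types of the matrix `IAS(G) = (I | A | I+A)`. -/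
inductive GType : Type
  | phi | chi | psi
  deriving DecidableEq

instance instFintypeGType : Fintype GType :=
  ⟨{GType.phi, GType.chi, GType.psi}, fun x => by cases x <;> simp⟩

/-- The column of `IAS(G) = (I | A(G) | I+A(G))` indexed by a ground set element of
`W(G) = V × {φ, χ, ψ}`. -/
def iasCol {V : Type} [DecidableEq V] (A : Matrix V V (ZMod 2)) : V × GType → V → ZMod 2
  | (v, GType.phi) => fun w => if w = v then 1 else 0
  | (v, GType.chi) => fun w => A w v
  | (v, GType.psi) => fun w => (if w = v then 1 else 0) + A w v

/-- Independence in the binary matroid `M(IAS(G))`: a set of ground elements is independent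
iff the corresponding columns of `IAS(G)` are linearly independent over `GF(2)`. -/
def IasIndep {V : Type} [DecidableEq V] (A : Matrix V V (ZMod 2))
    (S : Set (V × GType)) : Prop :=
  LinearIndependent (ZMod 2) (fun p : S => iasCol A p.1)

/-- A circuit of `M(IAS(G))`: a minimal dependent set. -/
def IasCircuit {V : Type} [DecidableEq V] (A : Matrix V V (ZMod 2))
    (C : Set (V × GType)) : Prop :=
  ¬ IasIndep A C ∧ ∀ D : Set (V × GType), D ⊂ C → IasIndep A D

/-- The rank of a subset of the ground set of `M(IAS(G))`: the `GF(2)`-rank of the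
corresponding set of columns of `IAS(G)`. -/
noncomputable def iasRk {V : Type} [Fintype V] [DecidableEq V] (A : Matrix V V (ZMod 2))
    (S : Set (V × GType)) : ℕ :=
  Module.finrank (ZMod 2) (Submodule.span (ZMod 2) (iasCol A '' S))

/-!
The φ-columns of `IAS(G)` are the standard unit vectors, and those indexed by `V ∖ {w}` span
exactly the vectors vanishing at `w`. Adding the χ-column of `v` to them therefore keeps the
set independent iff `A w v ≠ 0`, so the independent sets of `M(IAS(G))` determine every entry
of `A(G)`.
-/

open Set

lemma iasCol_comp_phi {V : Type} [Fintype V] [DecidableEq V] (A : Matrix V V (ZMod 2)) :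
    iasCol A ∘ (·, GType.phi) = Pi.basisFun (ZMod 2) V := by
  ext u x
  simp [iasCol, Pi.single_apply]

lemma iasIndep_insert_chi_phi_compl_iff {V : Type} [Fintype V] [DecidableEq V]
    (A : Matrix V V (ZMod 2)) (w v : V) :
    IasIndep A (insert (v, GType.chi) ((·, GType.phi) '' {w}ᶜ)) ↔ A w v ≠ 0 := by
  have hphi : LinearIndepOn (ZMod 2) (iasCol A) ((·, GType.phi) '' {w}ᶜ) :=
    .image_of_comp _ _ <| by
      rw [iasCol_comp_phi]
      exact (Pi.basisFun (ZMod 2) V).linearIndependent.linearIndepOn _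
  have hspan : Submodule.span (ZMod 2) (iasCol A '' ((·, GType.phi) '' {w}ᶜ)) =
      Pi.spanSubset (ZMod 2) {w}ᶜ := by
    rw [← image_comp, iasCol_comp_phi, Pi.spanSubset]
  rw [IasIndep, ← LinearIndepOn, linearIndepOn_insert (by simp), hspan, Pi.mem_spanSubset_iff]
  simp [hphi, iasCol]

theorem identity_compatible_isomorphism_eq_general {V : Type} [Fintype V] [DecidableEq V]
    (A₁ A₂ : Matrix V V (ZMod 2))
    (h : ∀ S : Set (V × GType), IasIndep A₁ S ↔ IasIndep A₂ S) :
    A₁ = A₂ := by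
  ext w v
  have hne : A₁ w v ≠ 0 ↔ A₂ w v ≠ 0 := by
    rw [← iasIndep_insert_chi_phi_compl_iff, ← iasIndep_insert_chi_phi_compl_iff, h]
  have hZMod2 : ∀ a b : ZMod 2, (a ≠ 0 ↔ b ≠ 0) → a = b := by decide
  exact hZMod2 _ _ hne

/-- if the identity map of the ground set `W(G) = V × {φ,χ,ψ}` is an
isomorphism between the isotropic matroids of two looped simple graphs on the same vertex
set (i.e. the two matroids have the same independent sets), then the graphs are equal. -/
theorem identity_compatible_isomorphism_eq {V : Type} [Fintype V] [DecidableEq V]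
    (A₁ A₂ : Matrix V V (ZMod 2)) (h₁ : A₁.IsSymm) (h₂ : A₂.IsSymm)
    (h : ∀ S : Set (V × GType), IasIndep A₁ S ↔ IasIndep A₂ S) :
    A₁ = A₂ :=
  identity_compatible_isomorphism_eq_general A₁ A₂ h
end

section
/- Let G be a looped simple graph, v a vertex, and G' the graph obtained from G by complementing the loop status of v (i.e., adding 1 to the (v,v) entry of the adjacency matrix). Then the map on ground sets that swaps (v,χ) with (v,ψ) and fixes all other elements is an isomorphism from M(IAS(G)) to M(IAS(G')). -/
/-!
Over `GF(2)`, column `v` of `A + E_vv` is column `v` of `A` plus the unit vector `e_v`, while all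
other columns are unchanged. Hence in `IAS(G') = (I | A + E_vv | I + A + E_vv)` the `χ`- and
`ψ`-columns of `v` are exactly the `ψ`- and `χ`-columns of `v` in `IAS(G)` (using `e_v + e_v = 0`),
and every other column agrees. The swap thus transports the column family of `IAS(G)` to that of
`IAS(G')`, so it preserves linear independence.
-/

section LoopComplement

variable {V : Type} [DecidableEq V] (A : Matrix V V (ZMod 2)) (v : V)

theorem add_single_apply_col_self (w : V) :
    (A + Matrix.single v v 1 : Matrix V V (ZMod 2)) w v = (if w = v then 1 else 0) + A w v := by
  rw [Matrix.add_apply, Matrix.single_apply]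
  split_ifs <;> simp_all [add_comm]

theorem iasCol_add_single_of_ne {u : V} (hu : u ≠ v) (t : GType) :
    iasCol (A + Matrix.single v v 1) (u, t) = iasCol A (u, t) := by
  cases t <;> funext w <;> simp [iasCol, Ne.symm hu]

theorem iasCol_add_single_chi :
    iasCol (A + Matrix.single v v 1) (v, .chi) = iasCol A (v, .psi) :=
  funext (add_single_apply_col_self A v)

theorem iasCol_add_single_psi :
    iasCol (A + Matrix.single v v 1) (v, .psi) = iasCol A (v, .chi) := by
  funext w
  simp only [iasCol, add_single_apply_col_self, ← add_assoc, CharTwo.add_self_eq_zero, zero_add]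

theorem iasCol_add_single_comp_swap :
    iasCol (A + Matrix.single v v 1) ∘ Equiv.swap (v, .chi) (v, .psi) = iasCol A := by
  funext ⟨u, t⟩
  by_cases hu : u = v
  · subst hu
    cases t
    · rw [Function.comp_apply, Equiv.swap_apply_of_ne_of_ne (by simp) (by simp)]
      rfl
    · simpa using iasCol_add_single_psi A u
    · simpa using iasCol_add_single_chi A u
  · rw [Function.comp_apply, Equiv.swap_apply_of_ne_of_ne (by simp [hu]) (by simp [hu])]
    exact iasCol_add_single_of_ne A v hu t

end LoopComplement

theorem loop_complement_iso_general {V : Type} [DecidableEq V]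
    (A : Matrix V V (ZMod 2)) (v : V) :
    ∀ S : Set (V × GType),
      IasIndep A S ↔
        IasIndep (A + Matrix.single v v 1)
          ((Equiv.swap (v, GType.chi) (v, GType.psi)) '' S) := fun S =>
  linearIndependent_equiv' (Equiv.Set.image _ S (Equiv.injective _))
    (funext fun p => congrFun (iasCol_add_single_comp_swap A v) p)

/-- complementing the loop status of `v` yields an isomorphism of isotropic
matroids given by swapping `(v,χ)` with `(v,ψ)`. -/
theorem loop_complement_iso {V : Type} [Fintype V] [DecidableEq V]
    (A : Matrix V V (ZMod 2)) (hA : A.IsSymm) (v : V) :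
    ∀ S : Set (V × GType),
      IasIndep A S ↔
        IasIndep (A + Matrix.single v v 1)
          ((Equiv.swap (v, GType.chi) (v, GType.psi)) '' S) :=
  loop_complement_iso_general A v
end

section
/- Let G be a connected looped simple graph with at least two vertices. Then M(IAS(G)) is a connected matroid. -/
instance : Fintype GType :=
  ⟨{GType.phi, GType.chi, GType.psi}, fun x => by cases x <;> simp⟩

/-- Adjacency in the looped simple graph with adjacency matrix `A` (loops do not count). -/
def GAdj {V : Type} (A : Matrix V V (ZMod 2)) (v w : V) : Prop :=
  v ≠ w ∧ A v w = 1

/-!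
`M(IAS(G))` is the linear matroid over `GF(2)` of the columns `φ_v = e_v`, `χ_v = A e_v` and
`ψ_v = φ_v + χ_v`. In any finitary matroid, lying on a common circuit is transitive: two strong
circuit eliminations either join the two outer elements or shrink `C₂ \ C₁`. If `A w v = 1` for
some `w ≠ v`, then `φ_v`, `χ_v`, `ψ_v` are nonzero and pairwise distinct (look at rows `v` and
`w`), so they form a triangle circuit; and the circuit of `χ_v` in the basis of `φ`-columns
contains `φ_w`, because `χ_v` has a `1` in row `w`. Along a path of `G` these circuits chain all
`φ`-elements together, and the triangles attach the `χ`- and `ψ`-elements.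
-/

open Set Submodule

section LinearMatroid

variable {α K W : Type*} [DivisionRing K] [AddCommGroup W] [Module K W] {f : α → W}
  {I J C : Set α} {e : α}

theorem LinearIndepOn.exists_insert_of_encard_lt (hI : LinearIndepOn K f I)
    (hJ : LinearIndepOn K f J) (hIJ : I.encard < J.encard) :
    ∃ e ∈ J, e ∉ I ∧ LinearIndepOn K f (insert e I) := by
  by_contra! h
  have hspan : span K (f '' J) ≤ span K (f '' I) := by
    refine span_le.2 ?_
    rintro _ ⟨e, heJ, rfl⟩
    exact hI.mem_span_iff.2 fun hins ↦ by_contra fun heI ↦ h e heJ heI hins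
  have := OrderHomClass.mono Cardinal.toENat (Submodule.rank_mono hspan)
  rw [toENat_rank_span_set hI, toENat_rank_span_set hJ] at this
  exact this.not_gt hIJ

variable (K) in
noncomputable def linearMatroid (f : α → W) : Matroid α :=
  (IndepMatroid.ofFinitaryCardAugment univ (LinearIndepOn K f) (linearIndepOn_empty K f)
    (fun _ _ hJ hIJ ↦ hJ.mono hIJ)
    (fun _ _ hI hIfin hJ hJfin hlt ↦ hI.exists_insert_of_encard_lt hJ
      (by rwa [← hIfin.cast_ncard_eq, ← hJfin.cast_ncard_eq, Nat.cast_lt]))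
    linearIndepOn_of_finite (fun _ _ ↦ subset_univ _)).matroid

@[simp] theorem linearMatroid_indep_iff : (linearMatroid K f).Indep I ↔ LinearIndepOn K f I :=
  Iff.rfl

@[simp] theorem linearMatroid_ground : (linearMatroid K f).E = univ := rfl

instance : (linearMatroid K f).Finitary := by
  unfold linearMatroid; infer_instance

theorem linearMatroid_mem_closure_iff (hI : LinearIndepOn K f I) :
    e ∈ (linearMatroid K f).closure I ↔ f e ∈ span K (f '' I) := by
  rw [Matroid.Indep.mem_closure_iff' hI, hI.mem_span_iff]
  simp

theorem Matroid.IsCircuit.mem_span_image_sdiff (hC : (linearMatroid K f).IsCircuit C)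
    (he : e ∈ C) : f e ∈ span K (f '' (C \ {e})) :=
  (linearMatroid_mem_closure_iff (hC.sdiff_singleton_indep he)).1
    (hC.mem_closure_sdiff_singleton_of_mem he)

theorem Matroid.IsCircuit.exists_apply_ne_zero (hC : (linearMatroid K f).IsCircuit C)
    (he : e ∈ C) (φ : W →ₗ[K] K) (hφ : φ (f e) ≠ 0) : ∃ x ∈ C, x ≠ e ∧ φ (f x) ≠ 0 := by
  by_contra! h
  refine hφ (span_le (p := LinearMap.ker φ) |>.2 ?_ (hC.mem_span_image_sdiff he))
  rintro _ ⟨x, ⟨hxC, hxe⟩, rfl⟩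
  exact h x hxC hxe

theorem linearMatroid_isCircuit_of_add_eq [Module (ZMod 2) W] {a b c : α}
    (ha : f a ≠ 0) (hb : f b ≠ 0) (hab : f a ≠ f b) (hc : f c = f a + f b) :
    (linearMatroid (ZMod 2) f).IsCircuit {c, a, b} := by
  have hc0 : f c ≠ 0 := by rwa [hc, Ne, add_eq_zero_iff_eq_neg, ZModModule.neg_eq_self]
  have hca : f c ≠ f a := by rwa [hc, Ne, add_eq_left]
  have hcb : f c ≠ f b := by rwa [hc, Ne, add_eq_right]
  have hsmul_ne : ∀ x y, f y ≠ 0 → f x ≠ f y → ∀ t : ZMod 2, t • f x ≠ f y := by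
    intro x y hy hxy t
    fin_cases t
    · exact (zero_smul (ZMod 2) (f x)).trans_ne hy.symm
    · exact (one_smul (ZMod 2) (f x)).trans_ne hxy
  have hpair : LinearIndepOn (ZMod 2) f {a, b} :=
    (linearIndepOn_pair_iff f (fun h ↦ hab (congrArg f h)) ha).2 (hsmul_ne a b hb hab)
  have hsingle : ∀ y, f y ≠ 0 → f y ≠ f c → c ∉ (linearMatroid (ZMod 2) f).closure {y} := by
    intro y hy hyc
    rw [linearMatroid_mem_closure_iff (.singleton hy), image_singleton, mem_span_singleton]
    exact fun ⟨t, ht⟩ ↦ hsmul_ne y c hc0 hyc t ht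
  refine (linearMatroid_indep_iff.2 hpair).insert_isCircuit_of_forall ?_ ?_ ?_
  · rintro (h | h) <;> subst h
    exacts [hca rfl, hcb rfl]
  · rw [linearMatroid_mem_closure_iff hpair, image_pair, hc]
    exact add_mem (subset_span (mem_insert _ _)) (subset_span (mem_insert_of_mem _ rfl))
  · have hne : a ≠ b := fun h ↦ hab (congrArg f h)
    rintro x (rfl | rfl)
    · rw [pair_sdiff_left hne]
      exact hsingle b hb hcb.symm
    · rw [pair_sdiff_right hne]
      exact hsingle a ha hca.symm

end LinearMatroid

namespace Matroid

variable {α : Type*} {M : Matroid α} {C₁ C₂ : Set α} {e f g x : α}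

/-- For `e ≠ f` this is the relation whose classes are the connected components of `M`. -/
def OnCommonCircuit (M : Matroid α) (e f : α) : Prop :=
  ∃ C, M.IsCircuit C ∧ e ∈ C ∧ f ∈ C

theorem OnCommonCircuit.symm (h : M.OnCommonCircuit e f) : M.OnCommonCircuit f e :=
  let ⟨C, hC, he, hf⟩ := h
  ⟨C, hC, hf, he⟩

/-- Two strong eliminations, first removing `x` while keeping `e`, then removing a new element `y`
of `C₂ \ C₁` while keeping `g`, either join `e` and `g` or shrink `C₂ \ C₁`. -/
theorem IsCircuit.onCommonCircuit_or_exists_sdiff_ssubset (hC₁ : M.IsCircuit C₁)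
    (hC₂ : M.IsCircuit C₂) (he : e ∈ C₁ \ C₂) (hg : g ∈ C₂ \ C₁) (hx : x ∈ C₁ ∩ C₂) :
    M.OnCommonCircuit e g ∨
      ∃ C, M.IsCircuit C ∧ g ∈ C ∧ (C₁ ∩ C).Nonempty ∧ C \ C₁ ⊂ C₂ \ C₁ := by
  obtain ⟨C₃, hC₃ss, hC₃, heC₃⟩ := hC₁.strong_elimination hC₂ hx.1 hx.2 he.1 he.2
  by_cases hgC₃ : g ∈ C₃
  · exact .inl ⟨C₃, hC₃, heC₃, hgC₃⟩
  obtain ⟨y, hyC₃, hyC₁⟩ := not_subset.1 fun h ↦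
    (hC₃ss (hC₃.eq_of_subset_isCircuit hC₁ h ▸ hx.1)).2 rfl
  have hyC₂ : y ∈ C₂ := (hC₃ss hyC₃).1.resolve_left hyC₁
  obtain ⟨C₄, hC₄ss, hC₄, hgC₄⟩ := hC₂.strong_elimination hC₃ hyC₂ hyC₃ hg.1 hgC₃
  by_cases heC₄ : e ∈ C₄
  · exact .inl ⟨C₄, hC₄, heC₄, hgC₄⟩
  have hsub : C₄ \ C₁ ⊆ C₂ \ C₁ := by
    rintro z ⟨hzC₄, hzC₁⟩
    rcases (hC₄ss hzC₄).1 with hzC₂ | hzC₃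
    · exact ⟨hzC₂, hzC₁⟩
    · exact ⟨(hC₃ss hzC₃).1.resolve_left hzC₁, hzC₁⟩
  refine .inr ⟨C₄, hC₄, hgC₄, ?_,
    (ssubset_iff_of_subset hsub).2 ⟨y, ⟨hyC₂, hyC₁⟩, fun h ↦ (hC₄ss h.1).2 rfl⟩⟩
  by_contra hdisj
  have hC₄C₂ : C₄ ⊆ C₂ := fun z hz ↦ (hsub ⟨hz, fun hz₁ ↦ hdisj ⟨z, hz₁, hz⟩⟩).1
  exact (hC₄ss (hC₄.eq_of_subset_isCircuit hC₂ hC₄C₂ ▸ hyC₂)).2 rfl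

theorem OnCommonCircuit.trans [M.Finitary] (h₁ : M.OnCommonCircuit e f)
    (h₂ : M.OnCommonCircuit f g) : M.OnCommonCircuit e g := by
  obtain ⟨C₁, hC₁, heC₁, hfC₁⟩ := h₁
  obtain ⟨C₂, hC₂, hfC₂, hgC₂⟩ := h₂
  have hmeet : (C₁ ∩ C₂).Nonempty := ⟨f, hfC₁, hfC₂⟩
  clear hfC₂
  induction hn : (C₂ \ C₁).ncard using Nat.strong_induction_on generalizing C₂ with
  | _ n ih =>
  by_cases heC₂ : e ∈ C₂
  · exact ⟨C₂, hC₂, heC₂, hgC₂⟩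
  by_cases hgC₁ : g ∈ C₁
  · exact ⟨C₁, hC₁, heC₁, hgC₁⟩
  obtain ⟨x, hx⟩ := hmeet
  obtain h | ⟨C, hC, hgC, hCmeet, hlt⟩ :=
    hC₁.onCommonCircuit_or_exists_sdiff_ssubset hC₂ ⟨heC₁, heC₂⟩ ⟨hgC₂, hgC₁⟩ hx
  · exact h
  exact ih _ (hn ▸ ncard_lt_ncard hlt hC₂.finite.sdiff) C hC hgC hCmeet rfl

end Matroid

section IsotropicMatroid

variable {V : Type} [DecidableEq V] (A : Matrix V V (ZMod 2))

/-- `M(IAS(G))`, the binary matroid represented by `(I | A(G) | I + A(G))`. -/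
noncomputable abbrev iasMatroid : Matroid (V × GType) := linearMatroid (ZMod 2) (iasCol A)

theorem iasCircuit_iff_isCircuit {C : Set (V × GType)} :
    IasCircuit A C ↔ (iasMatroid A).IsCircuit C := by
  simp only [Matroid.isCircuit_iff_forall_ssubset, Matroid.dep_iff, linearMatroid_ground,
    subset_univ, and_true]
  rfl

theorem iasMatroid_isCircuit_triangle {v w : V} (hwv : w ≠ v) (hA : A w v = 1) :
    (iasMatroid A).IsCircuit {(v, GType.psi), (v, GType.phi), (v, GType.chi)} := by
  refine linearMatroid_isCircuit_of_add_eq (fun h ↦ ?_) (fun h ↦ ?_) (fun h ↦ ?_) ?_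
  · simpa [iasCol] using congrFun h v
  · simpa [iasCol, hA] using congrFun h w
  · simpa [iasCol, hwv, hA] using congrFun h w
  · funext u
    simp [iasCol]

theorem iasMatroid_onCommonCircuit_chi_phi [Finite V] {v w : V} (hA : A w v = 1) :
    (iasMatroid A).OnCommonCircuit (v, GType.chi) (w, GType.phi) := by
  set B := range fun u : V ↦ (u, GType.phi)
  have hcol : (iasCol A ∘ fun u ↦ (u, GType.phi)) = Pi.basisFun (ZMod 2) V := by
    funext u z
    simp [iasCol, Pi.single_apply]
  have hB : LinearIndepOn (ZMod 2) (iasCol A) B :=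
    (linearIndepOn_range_iff (fun _ _ h ↦ congrArg Prod.fst h) _).2
      (hcol ▸ (Pi.basisFun (ZMod 2) V).linearIndependent)
  have hspan : iasCol A (v, GType.chi) ∈ span (ZMod 2) (iasCol A '' B) := by
    rw [← range_comp, hcol, Module.Basis.span_eq]
    exact mem_top
  obtain ⟨C, hCB, hC, hvC⟩ := Matroid.exists_isCircuit_of_mem_closure
    ((linearMatroid_mem_closure_iff hB).2 hspan) (by rintro ⟨u, hu⟩; cases hu)
  obtain ⟨x, hxC, hxv, hx⟩ :=
    hC.exists_apply_ne_zero hvC (LinearMap.proj w) (by simp [iasCol, hA])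
  obtain ⟨u, rfl⟩ := (hCB hxC).resolve_left hxv
  obtain rfl : u = w := by
    by_contra hne
    simp [iasCol, Ne.symm hne] at hx
  exact ⟨C, hC, hvC, hxC⟩

end IsotropicMatroid

theorem isotropic_matroid_connected_general {V : Type} [Fintype V] [DecidableEq V]
    (A : Matrix V V (ZMod 2))
    (hconn : ∀ v w : V, Relation.ReflTransGen (GAdj A) v w)
    (hcard : 2 ≤ Fintype.card V) :
    ∀ p q : V × GType, p ≠ q →
      ∃ C : Set (V × GType), IasCircuit A C ∧ p ∈ C ∧ q ∈ C := by
  set M := iasMatroid A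
  have htriangle (v : V) (s t : GType) : M.OnCommonCircuit (v, s) (v, t) := by
    obtain ⟨u, hu⟩ := Fintype.exists_ne_of_one_lt_card hcard v
    obtain ⟨w, -, hwv, hw⟩ := (hconn u v).cases_tail.resolve_left hu.symm
    exact ⟨_, iasMatroid_isCircuit_triangle A hwv hw, by cases s <;> simp, by cases t <;> simp⟩
  have hphi (v w : V) : M.OnCommonCircuit (v, GType.phi) (w, GType.phi) := by
    induction hconn v w with
    | refl => exact htriangle v _ _
    | tail _ hadj ih =>
      exact ih.trans ((iasMatroid_onCommonCircuit_chi_phi A hadj.2).symm.trans (htriangle _ _ _))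
  rintro ⟨v, s⟩ ⟨w, t⟩ -
  obtain ⟨C, hC, hp, hq⟩ := ((htriangle v s _).trans (hphi v w)).trans (htriangle w _ t)
  exact ⟨C, (iasCircuit_iff_isCircuit A).2 hC, hp, hq⟩

/-- if `G` is connected with at least two vertices, then `M(IAS(G))` is a
connected matroid: every two (distinct) elements of the ground set lie in a common
circuit. -/
theorem isotropic_matroid_connected {V : Type} [Fintype V] [DecidableEq V]
    (A : Matrix V V (ZMod 2)) (hA : A.IsSymm)
    (hconn : ∀ v w : V, Relation.ReflTransGen (GAdj A) v w)
    (hcard : 2 ≤ Fintype.card V) :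
    ∀ p q : V × GType, p ≠ q →
      ∃ C : Set (V × GType), IasCircuit A C ∧ p ∈ C ∧ q ∈ C :=
  isotropic_matroid_connected_general A hconn hcard
end

section
/- Let v be a vertex of a looped simple graph G. Then the isotropic matroid of the vertex-deleted graph G−v equals the minor of M(IAS(G)) obtained by contracting the element (v,φ) and deleting the elements (v,χ) and (v,ψ): M(IAS(G−v)) = (M(IAS(G))/(v,φ)) − (v,χ) − (v,ψ). -/
/-! Restricting vectors to the coordinates `V ∖ {v}` is a linear map `π` whose kernel is
spanned by the column `e_v` of `(v, φ)`, and it sends every other column of `IAS(G)` to the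
corresponding column of `IAS(G − v)`. Since `ker π` lies in the span of the columns of
`S ∪ {(v, φ)}`, rank–nullity for `π` on that span gives `r(S ∪ {(v, φ)}) = r_{G−v}(S) + 1`. -/

open Module Submodule

theorem LinearMap.finrank_map_add_finrank_ker_of_ker_le {K M N : Type*} [DivisionRing K]
    [AddCommGroup M] [Module K M] [AddCommGroup N] [Module K N] (f : M →ₗ[K] N)
    {W : Submodule K M} [FiniteDimensional K W] (h : LinearMap.ker f ≤ W) :
    finrank K (W.map f) + finrank K (LinearMap.ker f) = finrank K W := by
  have hker : LinearMap.ker (f.domRestrict W) = (LinearMap.ker f).comap W.subtype :=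
    LinearMap.ker_domRestrict W f
  rw [← (f.domRestrict W).finrank_range_add_finrank_ker, LinearMap.range_domRestrict, hker,
    (Submodule.comapSubtypeEquivOfLe h).finrank_eq]

theorem LinearMap.finrank_span_insert_eq_finrank_span_image_add_one {K M N : Type*}
    [DivisionRing K] [AddCommGroup M] [Module K M] [AddCommGroup N] [Module K N]
    [FiniteDimensional K M] (f : M →ₗ[K] N) {e : M} (he : e ≠ 0)
    (hker : LinearMap.ker f = K ∙ e) (s : Set M) :
    finrank K (span K (insert e s)) = finrank K (span K (f '' s)) + 1 := by
  have hle : LinearMap.ker f ≤ span K (insert e s) := by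
    rw [hker, span_le, Set.singleton_subset_iff]
    exact subset_span (Set.mem_insert e s)
  have hfe : f e = 0 := LinearMap.mem_ker.1 (hker ▸ mem_span_singleton_self e)
  rw [← f.finrank_map_add_finrank_ker_of_ker_le hle, hker, finrank_span_singleton he, map_span,
    Set.image_insert_eq, hfe, span_insert_zero]

theorem LinearMap.ker_funLeft_subtype_ne {R V : Type*} [Semiring R] [DecidableEq V] (v : V) :
    LinearMap.ker (LinearMap.funLeft R R (Subtype.val : {w : V // w ≠ v} → V)) =
      R ∙ Pi.single v 1 := by
  ext f
  rw [LinearMap.mem_ker, mem_span_singleton]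
  constructor
  · intro hf
    refine ⟨f v, funext fun w => ?_⟩
    by_cases hw : w = v
    · subst hw; simp
    · simpa [hw] using (congrFun hf ⟨w, hw⟩).symm
  · rintro ⟨c, rfl⟩
    funext w
    simp [LinearMap.funLeft_apply, w.2]

theorem iasCol_phi {V : Type} [DecidableEq V] (A : Matrix V V (ZMod 2)) (v : V) :
    iasCol A (v, GType.phi) = Pi.single v 1 := by
  funext w
  simp [iasCol, Pi.single_apply]

theorem iasCol_submatrix {V U : Type} [DecidableEq V] [DecidableEq U] (A : Matrix V V (ZMod 2))
    {f : U → V} (hf : Function.Injective f) (p : U × GType) :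
    iasCol (A.submatrix f f) p = LinearMap.funLeft (ZMod 2) (ZMod 2) f (iasCol A (f p.1, p.2)) := by
  obtain ⟨u, t⟩ := p
  cases t <;> funext w <;> simp [iasCol, LinearMap.funLeft_apply, hf.eq_iff]

theorem vertex_deletion_minor_general {V : Type} [Fintype V] [DecidableEq V]
    (A : Matrix V V (ZMod 2)) (v : V) :
    ∀ S : Set ({w : V // w ≠ v} × GType),
      iasRk (A.submatrix (Subtype.val : {w : V // w ≠ v} → V) Subtype.val) S + 1 =
        iasRk A
          (insert (v, GType.phi)
            ((fun p : {w : V // w ≠ v} × GType => ((p.1 : V), p.2)) '' S)) := by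
  intro S
  have hsingle : (Pi.single v 1 : V → ZMod 2) ≠ 0 := by simp
  rw [iasRk, iasRk, funext (iasCol_submatrix A Subtype.val_injective), Set.image_insert_eq,
    iasCol_phi,
    LinearMap.finrank_span_insert_eq_finrank_span_image_add_one _ hsingle
      (LinearMap.ker_funLeft_subtype_ne v), Set.image_image, Set.image_image]

/-- `M(IAS(G−v)) = (M(IAS(G))/(v,φ)) − (v,χ) − (v,ψ)`.  The minor on the
right has ground set `W(G−v) = (V∖{v}) × {φ,χ,ψ}` and rank function
`r'(S) = r(S ∪ {(v,φ)}) − 1`; we assert that this is the rank function of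
`M(IAS(G−v))`. -/
theorem vertex_deletion_minor {V : Type} [Fintype V] [DecidableEq V]
    (A : Matrix V V (ZMod 2)) (hA : A.IsSymm) (v : V) :
    ∀ S : Set ({w : V // w ≠ v} × GType),
      iasRk (A.submatrix (Subtype.val : {w : V // w ≠ v} → V) Subtype.val) S + 1 =
        iasRk A
          (insert (v, GType.phi)
            ((fun p : {w : V // w ≠ v} × GType => ((p.1 : V), p.2)) '' S)) :=
  vertex_deletion_minor_general A v
end

section
/- Let B be a symmetric m×m matrix over GF(2), ρ a 1×m row vector, and κ = ρᵀ. Then among the three ranks rank(B)+1, rank of the (m+1)×(m+1) matrix [[B, κ],[ρ, 1]], and rank of [[B, κ],[ρ, 0]], two are equal and the third is exactly one less. -/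
open Matrix Module Submodule


/-- The `(m+1)×(m+1)` matrix `[[B, κ],[ρ, e]]` obtained by bordering `B` with the column
`κ = ρᵀ`, the row `ρ`, and bottom-right entry `e`. -/
def bordered {m : ℕ} (B : Matrix (Fin m) (Fin m) (ZMod 2)) (ρ : Fin m → ZMod 2)
    (e : ZMod 2) : Matrix (Fin m ⊕ Fin 1) (Fin m ⊕ Fin 1) (ZMod 2) :=
  Matrix.fromBlocks B (Matrix.of fun i (_ : Fin 1) => ρ i)
    (Matrix.of fun (_ : Fin 1) j => ρ j) (Matrix.of fun _ _ => e)

lemma bordered_mulVec {m : ℕ} (B : Matrix (Fin m) (Fin m) (ZMod 2)) (ρ : Fin m → ZMod 2)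
    (e : ZMod 2) (x : Fin m → ZMod 2) (t : Fin 1 → ZMod 2) :
    bordered B ρ e *ᵥ Sum.elim x t =
      Sum.elim (B *ᵥ x + t 0 • ρ) (fun _ => ρ ⬝ᵥ x + e * t 0) := by
  rw [bordered, fromBlocks_mulVec]
  funext i
  cases i with
  | inl i =>
    simp [Matrix.mulVec, dotProduct, Fin.sum_univ_one, mul_comm]
  | inr i =>
    simp [Matrix.mulVec, dotProduct, Fin.sum_univ_one]

lemma sum_elim_decomp {m : ℕ} (v : Fin m ⊕ Fin 1 → ZMod 2) :
    v = Sum.elim (v ∘ Sum.inl) (fun _ => v (Sum.inr 0)) := by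
  funext i
  cases i with
  | inl i => rfl
  | inr i => simp [Subsingleton.elim i 0]

lemma symdot {m : ℕ} {B : Matrix (Fin m) (Fin m) (ZMod 2)} (hB : B.IsSymm)
    (a b : Fin m → ZMod 2) : a ⬝ᵥ (B *ᵥ b) = (B *ᵥ a) ⬝ᵥ b := by
  rw [Matrix.dotProduct_mulVec]
  congr 1
  rw [← Matrix.mulVec_transpose, hB.eq]

/-- The embedding `v ↦ (v, x₀ ⬝ᵥ v)`. -/
def gmap {m : ℕ} (x₀ : Fin m → ZMod 2) :
    (Fin m → ZMod 2) →ₗ[ZMod 2] (Fin m ⊕ Fin 1 → ZMod 2) where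
  toFun v := Sum.elim v (fun _ => x₀ ⬝ᵥ v)
  map_add' v w := by
    funext i; cases i <;> simp [dotProduct_add]
  map_smul' a v := by
    funext i; cases i <;> simp [dotProduct_smul]

lemma gmap_inj {m : ℕ} (x₀ : Fin m → ZMod 2) : Function.Injective (gmap x₀) := by
  intro v w h
  funext i
  exact congrFun h (Sum.inl i)

lemma range_bordered_of_mem_eq {m : ℕ} (B : Matrix (Fin m) (Fin m) (ZMod 2))
    (hB : B.IsSymm) (ρ : Fin m → ZMod 2) (x₀ : Fin m → ZMod 2) (hx : B *ᵥ x₀ = ρ) :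
    LinearMap.range (bordered B ρ (ρ ⬝ᵥ x₀)).mulVecLin =
      Submodule.map (gmap x₀) (LinearMap.range B.mulVecLin) := by
  ext y
  constructor
  · rintro ⟨v, rfl⟩
    rw [Matrix.mulVecLin_apply, sum_elim_decomp v, bordered_mulVec]
    set x := v ∘ Sum.inl
    set t0 := v (Sum.inr 0)
    refine ⟨B *ᵥ (x + t0 • x₀), ⟨x + t0 • x₀, rfl⟩, ?_⟩
    have h1 : B *ᵥ (x + t0 • x₀) = B *ᵥ x + t0 • ρ := by
      rw [Matrix.mulVec_add, Matrix.mulVec_smul, hx]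
    rw [gmap]
    simp only [LinearMap.coe_mk, AddHom.coe_mk, h1]
    have h2 : (fun _ : Fin 1 => x₀ ⬝ᵥ (B *ᵥ x + t0 • ρ)) =
        fun _ : Fin 1 => ρ ⬝ᵥ x + ρ ⬝ᵥ x₀ * t0 := by
      funext j
      rw [← h1, symdot hB, hx]
      simp [dotProduct_add, dotProduct_smul, smul_eq_mul]
      ring
    rw [h2]
  · rintro ⟨w, ⟨u, rfl⟩, rfl⟩
    refine ⟨Sum.elim u (fun _ => 0), ?_⟩
    rw [Matrix.mulVecLin_apply, bordered_mulVec]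
    rw [gmap]
    simp only [Matrix.mulVecLin_apply, LinearMap.coe_mk, AddHom.coe_mk]
    have h2 : x₀ ⬝ᵥ (B *ᵥ u) = ρ ⬝ᵥ u := by rw [symdot hB, hx]
    simp [h2]

noncomputable abbrev Esum (m : ℕ) :
    (Fin m ⊕ Fin 1 → ZMod 2) ≃ₗ[ZMod 2] (Fin m → ZMod 2) × (Fin 1 → ZMod 2) :=
  LinearEquiv.sumArrowLequivProdArrow (Fin m) (Fin 1) (ZMod 2) (ZMod 2)

lemma range_bordered_of_mem_ne {m : ℕ} (B : Matrix (Fin m) (Fin m) (ZMod 2))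
    (hB : B.IsSymm) (ρ : Fin m → ZMod 2) (x₀ : Fin m → ZMod 2) (hx : B *ᵥ x₀ = ρ)
    (e : ZMod 2) (he : e ≠ ρ ⬝ᵥ x₀) :
    LinearMap.range (bordered B ρ e).mulVecLin =
      Submodule.map (Esum m).symm.toLinearMap
        ((LinearMap.range B.mulVecLin).prod ⊤) := by
  have hec : e + ρ ⬝ᵥ x₀ = 1 := by
    have h01 : ∀ a : ZMod 2, a = 0 ∨ a = 1 := by decide
    rcases h01 e with rfl | rfl <;> rcases h01 (ρ ⬝ᵥ x₀) with h | h <;>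
      simp_all <;> decide
  ext y
  rw [show (Esum m).symm.toLinearMap = ((Esum m).symm : _ →ₛₗ[RingHom.id (ZMod 2)] _) from rfl,
    Submodule.mem_map_equiv, LinearEquiv.symm_symm]
  constructor
  · rintro ⟨v, rfl⟩
    rw [Matrix.mulVecLin_apply, sum_elim_decomp v, bordered_mulVec]
    constructor
    · refine ⟨v ∘ Sum.inl + v (Sum.inr 0) • x₀, ?_⟩
      simp only [Matrix.mulVecLin_apply, Matrix.mulVec_add, Matrix.mulVec_smul, hx]
      rfl
    · trivial
  · rintro ⟨hy1, -⟩
    obtain ⟨u, hu⟩ := hy1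
    set s := ((Esum m) y).2 0 with hs
    set τ := s + ρ ⬝ᵥ u with hτ
    refine ⟨Sum.elim (u + τ • x₀) (fun _ => τ), ?_⟩
    rw [Matrix.mulVecLin_apply, bordered_mulVec]
    rw [sum_elim_decomp y]
    have h1 : B *ᵥ (u + τ • x₀) + τ • ρ = y ∘ Sum.inl := by
      rw [Matrix.mulVec_add, Matrix.mulVec_smul, hx, add_assoc, ← add_smul,
        CharTwo.add_self_eq_zero, zero_smul, add_zero]
      exact hu
    have h2 : (fun _ : Fin 1 => ρ ⬝ᵥ (u + τ • x₀) + e * τ) =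
        fun _ : Fin 1 => y (Sum.inr 0) := by
      funext j
      have hρ : ρ ⬝ᵥ (u + τ • x₀) = ρ ⬝ᵥ u + τ * (ρ ⬝ᵥ x₀) := by
        simp [dotProduct_add, dotProduct_smul, smul_eq_mul]
      rw [hρ]
      have h3 : ρ ⬝ᵥ u + τ * (ρ ⬝ᵥ x₀) + e * τ = ρ ⬝ᵥ u + (e + ρ ⬝ᵥ x₀) * τ := by ring
      rw [h3, hec, one_mul, hτ]
      have h4 : ρ ⬝ᵥ u + (s + ρ ⬝ᵥ u) = s + (ρ ⬝ᵥ u + ρ ⬝ᵥ u) := by ring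
      rw [h4, CharTwo.add_self_eq_zero, add_zero]
      rfl
    rw [h1, h2]

lemma exists_ker_dot {K : Type*} [Field K] {m : ℕ} (B : Matrix (Fin m) (Fin m) K)
    (hB : B.IsSymm) (ρ : Fin m → K) (h : ρ ∉ LinearMap.range B.mulVecLin) :
    ∃ z, B *ᵥ z = 0 ∧ ρ ⬝ᵥ z ≠ 0 := by
  by_contra hc
  push_neg at hc
  set f := B.mulVecLin with hf
  let φ : (Fin m → K) →ₗ[K] K :=
    { toFun := fun x => ρ ⬝ᵥ x
      map_add' := fun x y => by simp [dotProduct_add]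
      map_smul' := fun a x => by simp [dotProduct_smul] }
  have hker : LinearMap.ker f ≤ LinearMap.ker φ := by
    intro z hz
    simp only [LinearMap.mem_ker] at hz ⊢
    exact hc z hz
  let q : ((Fin m → K) ⧸ LinearMap.ker f) →ₗ[K] K := Submodule.liftQ _ φ hker
  let eq := (LinearMap.quotKerEquivRange f).symm
  obtain ⟨ψ, hψ⟩ := LinearMap.exists_extend (q ∘ₗ eq.toLinearMap)
  have key : ∀ x, ψ (f x) = ρ ⬝ᵥ x := by
    intro x
    have : ψ ((LinearMap.range f).subtype ⟨f x, LinearMap.mem_range_self f x⟩) =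
        (q ∘ₗ eq.toLinearMap) ⟨f x, LinearMap.mem_range_self f x⟩ := by
      rw [← LinearMap.comp_apply, hψ]
    simp only [Submodule.coe_subtype] at this
    rw [this]
    have h2 : eq ⟨f x, LinearMap.mem_range_self f x⟩ = Submodule.Quotient.mk x := by
      apply (LinearMap.quotKerEquivRange f).injective
      simp [eq, LinearMap.quotKerEquivRange_apply_mk]
    simp [h2, q, Submodule.liftQ_apply, φ]
  set w := fun i => ψ (Pi.single i 1) with hw
  have hsingle : ∀ x : Fin m, (fun j => if x = j then (1:K) else 0) = Pi.single x 1 := by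
    intro x; funext j; simp [Pi.single_apply, eq_comm]
  have hψw : ∀ y, ψ y = w ⬝ᵥ y := by
    intro y
    conv_lhs => rw [pi_eq_sum_univ y]
    rw [map_sum]
    simp [dotProduct, mul_comm, w, hsingle]
  apply h
  refine ⟨w, ?_⟩
  have hBw : B.mulVecLin w = B *ᵥ w := rfl
  rw [hBw]
  funext i
  have hk := key (Pi.single i 1)
  rw [hψw] at hk
  have hfx : f (Pi.single i 1) = B *ᵥ Pi.single i 1 := rfl
  rw [hfx, Matrix.dotProduct_mulVec] at hk
  have hsym : w ᵥ* B = B *ᵥ w := by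
    rw [← Matrix.mulVec_transpose, hB.eq]
  rw [hsym] at hk
  simpa using hk

lemma range_bordered_of_notMem {m : ℕ} (B : Matrix (Fin m) (Fin m) (ZMod 2))
    (hB : B.IsSymm) (ρ : Fin m → ZMod 2) (h : ρ ∉ LinearMap.range B.mulVecLin)
    (e : ZMod 2) :
    LinearMap.range (bordered B ρ e).mulVecLin =
      Submodule.map (Esum m).symm.toLinearMap
        ((LinearMap.range B.mulVecLin ⊔ Submodule.span (ZMod 2) {ρ}).prod ⊤) := by
  obtain ⟨z, hz0, hz1⟩ := exists_ker_dot B hB ρ h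
  have hz1' : ρ ⬝ᵥ z = 1 := by
    have h01 : ∀ a : ZMod 2, a ≠ 0 → a = 1 := by decide
    exact h01 _ hz1
  ext y
  rw [show (Esum m).symm.toLinearMap = ((Esum m).symm : _ →ₛₗ[RingHom.id (ZMod 2)] _) from rfl,
    Submodule.mem_map_equiv, LinearEquiv.symm_symm]
  constructor
  · rintro ⟨v, rfl⟩
    rw [Matrix.mulVecLin_apply, sum_elim_decomp v, bordered_mulVec]
    refine ⟨?_, trivial⟩
    show B *ᵥ (v ∘ Sum.inl) + v (Sum.inr 0) • ρ ∈ _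
    exact Submodule.add_mem _ (Submodule.mem_sup_left ⟨v ∘ Sum.inl, rfl⟩)
      (Submodule.mem_sup_right (Submodule.smul_mem _ _ (Submodule.subset_span rfl)))
  · rintro ⟨hy1, -⟩
    have hy1 : ((Esum m) y).1 ∈ LinearMap.range B.mulVecLin ⊔ Submodule.span (ZMod 2) {ρ} := hy1
    rw [Submodule.mem_sup] at hy1
    obtain ⟨a, ⟨u, hu⟩, b, hb, hab⟩ := hy1
    rw [Submodule.mem_span_singleton] at hb
    obtain ⟨c, rfl⟩ := hb
    set s := ((Esum m) y).2 0 with hs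
    set τ := s + ρ ⬝ᵥ u + e * c with hτ
    refine ⟨Sum.elim (u + τ • z) (fun _ => c), ?_⟩
    rw [Matrix.mulVecLin_apply, bordered_mulVec, sum_elim_decomp y]
    have h1 : B *ᵥ (u + τ • z) + c • ρ = y ∘ Sum.inl := by
      rw [Matrix.mulVec_add, Matrix.mulVec_smul, hz0, smul_zero, add_zero]
      rw [show B *ᵥ u = a from hu, hab]
      rfl
    have h2 : (fun _ : Fin 1 => ρ ⬝ᵥ (u + τ • z) + e * c) =
        fun _ : Fin 1 => y (Sum.inr 0) := by
      funext j
      have hρ : ρ ⬝ᵥ (u + τ • z) = ρ ⬝ᵥ u + τ * (ρ ⬝ᵥ z) := by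
        simp [dotProduct_add, dotProduct_smul, smul_eq_mul]
      rw [hρ, hz1', mul_one, hτ]
      have h4 : ρ ⬝ᵥ u + (s + ρ ⬝ᵥ u + e * c) + e * c =
          s + ((ρ ⬝ᵥ u + ρ ⬝ᵥ u) + (e * c + e * c)) := by ring
      rw [h4, CharTwo.add_self_eq_zero, CharTwo.add_self_eq_zero, add_zero, add_zero]
      rfl
    rw [h1, h2]

def submodProdEquiv {K V W : Type*} [Field K] [AddCommGroup V] [Module K V]
    [AddCommGroup W] [Module K W] (p : Submodule K V) (q : Submodule K W) :
    (p.prod q) ≃ₗ[K] p × q where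
  toFun x := (⟨x.1.1, x.2.1⟩, ⟨x.1.2, x.2.2⟩)
  invFun y := ⟨(y.1.1, y.2.1), ⟨y.1.2, y.2.2⟩⟩
  map_add' _ _ := rfl
  map_smul' _ _ := rfl
  left_inv _ := rfl
  right_inv _ := rfl

lemma finrank_submod_prod {K V W : Type*} [Field K] [AddCommGroup V] [Module K V]
    [AddCommGroup W] [Module K W] [FiniteDimensional K V] [FiniteDimensional K W]
    (p : Submodule K V) (q : Submodule K W) :
    finrank K (p.prod q) = finrank K p + finrank K q := by
  rw [(submodProdEquiv p q).finrank_eq, Module.finrank_prod]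

lemma finrank_top_fin1 : finrank (ZMod 2) (⊤ : Submodule (ZMod 2) (Fin 1 → ZMod 2)) = 1 := by
  rw [finrank_top, Module.finrank_pi, Fintype.card_fin]

/-- for a symmetric matrix `B` over `GF(2)` and a row vector `ρ` with
`κ = ρᵀ`, among the three ranks `rank(B) + 1`, `rank [[B,κ],[ρ,1]]`, `rank [[B,κ],[ρ,0]]`,
two are equal and the third is exactly one less. -/
theorem bordered_rank_trichotomy {m : ℕ} (B : Matrix (Fin m) (Fin m) (ZMod 2))
    (hB : B.IsSymm) (ρ : Fin m → ZMod 2) :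
    (B.rank + 1 = (bordered B ρ 1).rank ∧ (bordered B ρ 0).rank + 1 = B.rank + 1) ∨
    (B.rank + 1 = (bordered B ρ 0).rank ∧ (bordered B ρ 1).rank + 1 = B.rank + 1) ∨
    ((bordered B ρ 1).rank = (bordered B ρ 0).rank ∧
      B.rank + 1 + 1 = (bordered B ρ 1).rank) := by
  by_cases h : ρ ∈ LinearMap.range B.mulVecLin
  · obtain ⟨x₀, hx⟩ := h
    have hx' : B *ᵥ x₀ = ρ := hx
    have hceq : (bordered B ρ (ρ ⬝ᵥ x₀)).rank = B.rank := by
      rw [Matrix.rank, range_bordered_of_mem_eq B hB ρ x₀ hx',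
        ← (Submodule.equivMapOfInjective (gmap x₀) (gmap_inj x₀)
            (LinearMap.range B.mulVecLin)).finrank_eq, Matrix.rank]
    have hne : ∀ e : ZMod 2, e ≠ ρ ⬝ᵥ x₀ → (bordered B ρ e).rank = B.rank + 1 := by
      intro e he
      rw [Matrix.rank, range_bordered_of_mem_ne B hB ρ x₀ hx' e he]
      have hm := LinearEquiv.finrank_map_eq (Esum m).symm
        ((LinearMap.range B.mulVecLin).prod ⊤)
      rw [hm, finrank_submod_prod, finrank_top_fin1, Matrix.rank]
    have h01 : ∀ a : ZMod 2, a = 0 ∨ a = 1 := by decide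
    rcases h01 (ρ ⬝ᵥ x₀) with hc | hc
    · left
      constructor
      · rw [hne 1 (by rw [hc]; decide)]
      · rw [← hc, hceq]
    · right; left
      constructor
      · rw [hne 0 (by rw [hc]; decide)]
      · rw [← hc, hceq]
  · have hρ0 : ρ ≠ 0 := by
      intro h0
      exact h (h0 ▸ Submodule.zero_mem _)
    have hsup : finrank (ZMod 2)
        ↥(LinearMap.range B.mulVecLin ⊔ Submodule.span (ZMod 2) {ρ}) = B.rank + 1 := by
      have h1 : finrank (ZMod 2) (Submodule.span (ZMod 2) {ρ}) = 1 :=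
        finrank_span_singleton hρ0
      have h2 : LinearMap.range B.mulVecLin ⊓ Submodule.span (ZMod 2) {ρ} = ⊥ := by
        rw [eq_bot_iff]
        rintro x ⟨hx1, hx2⟩
        rw [SetLike.mem_coe, Submodule.mem_span_singleton] at hx2
        obtain ⟨a, rfl⟩ := hx2
        have h01 : ∀ a : ZMod 2, a = 0 ∨ a = 1 := by decide
        rcases h01 a with rfl | rfl
        · simp
        · rw [one_smul] at hx1 ⊢
          exact absurd hx1 h
      have h3 := Submodule.finrank_sup_add_finrank_inf_eq
        (LinearMap.range B.mulVecLin) (Submodule.span (ZMod 2) {ρ})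
      rw [h1, h2, finrank_bot] at h3
      rw [Matrix.rank]
      omega
    have he : ∀ e : ZMod 2, (bordered B ρ e).rank = B.rank + 2 := by
      intro e
      rw [Matrix.rank, range_bordered_of_notMem B hB ρ h e]
      have hm := LinearEquiv.finrank_map_eq (Esum m).symm
        ((LinearMap.range B.mulVecLin ⊔ Submodule.span (ZMod 2) {ρ}).prod ⊤)
      rw [hm, finrank_submod_prod, finrank_top_fin1, hsup]
    right; right
    constructor
    · rw [he 1, he 0]
    · rw [he 1]
end

section
/- Let G be a looped simple graph. Define the collection L(G) of transverse cycles: subtransversals of W(G) whose corresponding columns of IAS(G) sum to zero over GF(2). Then L(G) = { σ(X·Ψ(G)) ⊞ σ(N(X)·Φ(G)) : X ⊆ V(G) }, where Φ(G) = {(v,φ) : v∈V(G)}, Ψ(G) consists of (v,ψ) for looped v and (v,χ) for unlooped v, N(X) is the set of vertices adjacent to an odd number of elements of X, · denotes selecting the elements corresponding to a vertex subset, σ is the coordinate-wise reduction to subtransversals, and ⊞ is the GF(2) addition on subtransversals given cell-wise by the rule that two distinct nonempty cell-entries sum to the third element of the cell. In particular, L(G) is a GF(2)-subspace of dimension |V(G)|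 (when G has no isolated structure forcing degeneracy) parametrized bijectively by subsets X ⊆ V(G). -/
/-- Given two distinct column types, the third one. -/
def gthird : GType → GType → GType
  | GType.phi, GType.chi => GType.psi
  | GType.chi, GType.phi => GType.psi
  | GType.phi, GType.psi => GType.chi
  | GType.psi, GType.phi => GType.chi
  | GType.chi, GType.psi => GType.phi
  | GType.psi, GType.chi => GType.phi
  | a, _ => a

/-- The cell-wise `GF(2)`-addition `⊞` on `{∅, φ, χ, ψ}` (the Klein four-group):
`∅` is the identity, each element is its own inverse, and two distinct nonempty
values sum to the third. -/
def oadd : Option GType → Option GType → Option GType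
  | none, t => t
  | some a, none => some a
  | some a, some b => if a = b then none else some (gthird a b)

/-- A subtransversal of `W(G)`, encoded as a function assigning to each vertex at most
one column type; its column sum in `IAS(G)`. -/
def cycSum {V : Type} [Fintype V] [DecidableEq V] (A : Matrix V V (ZMod 2))
    (f : V → Option GType) : V → ZMod 2 :=
  ∑ v : V, (f v).elim 0 (fun ι => iasCol A (v, ι))

/-- The subtransversal `σ(X·Ψ(G)) ⊞ σ(N(X)·Φ(G))`: at a vertex `v`, the `⊞`-sum of the
`Ψ(G)`-entry (`ψ` if `v` is looped, `χ` if not) when `v ∈ X`, and the `φ`-entry when `v`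
is adjacent to an odd number of elements of `X`. -/
def transCyc {V : Type} [Fintype V] [DecidableEq V] (A : Matrix V V (ZMod 2))
    (X : Finset V) : V → Option GType := fun v =>
  oadd (if v ∈ X then some (if A v v = 1 then GType.psi else GType.chi) else none)
    (if (∑ x ∈ X.erase v, A v x) = 1 then some GType.phi else none)

/-!
Identify each cell `{∅, φ, χ, ψ}` with `GF(2)²` by recording how often its column uses the
`I`-block and the `A`-block of `IAS(G)` (so `ψ ↦ (1, 1)`); this turns `⊞` into `+`. Writing
`φ f, χ f : GF(2)^V` for the two coordinates of a subtransversal `f`, its column sum is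
`φ f + A χ f`, so `f` is a transverse cycle iff `φ f = A χ f`. Hence a transverse cycle is
determined by the freely chosen set `X = supp (χ f)`, and is then `σ(X·Ψ(G)) ⊞ σ(N(X)·Φ(G))`.
-/

def cellVec : Option GType → ZMod 2 × ZMod 2
  | none => (0, 0)
  | some GType.phi => (1, 0)
  | some GType.chi => (0, 1)
  | some GType.psi => (1, 1)

theorem cellVec_injective : Function.Injective cellVec := by
  decide

theorem cellVec_oadd (s t : Option GType) : cellVec (oadd s t) = cellVec s + cellVec t := by
  revert s t
  decide

section Coordinates

open Matrix

variable {V : Type}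

def phiCoord (f : V → Option GType) : V → ZMod 2 := fun v => (cellVec (f v)).1

def chiCoord (f : V → Option GType) : V → ZMod 2 := fun v => (cellVec (f v)).2

theorem eq_of_phiCoord_eq_of_chiCoord_eq {f g : V → Option GType}
    (hphi : phiCoord f = phiCoord g) (hchi : chiCoord f = chiCoord g) : f = g :=
  funext fun v => cellVec_injective (Prod.ext (congrFun hphi v) (congrFun hchi v))

theorem phiCoord_oadd (f g : V → Option GType) :
    phiCoord (fun v => oadd (f v) (g v)) = phiCoord f + phiCoord g :=
  funext fun v => congrArg Prod.fst (cellVec_oadd (f v) (g v))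

theorem chiCoord_oadd (f g : V → Option GType) :
    chiCoord (fun v => oadd (f v) (g v)) = chiCoord f + chiCoord g :=
  funext fun v => congrArg Prod.snd (cellVec_oadd (f v) (g v))

variable [Fintype V]

/-- The set `X` of a transverse cycle `σ(X·Ψ(G)) ⊞ σ(N(X)·Φ(G))`. -/
def chiSupport (f : V → Option GType) : Finset V := {v | chiCoord f v = 1}

theorem indicator_chiSupport (f : V → Option GType) :
    Set.indicator (chiSupport f : Set V) 1 = chiCoord f := by
  funext v
  simp only [chiSupport, Finset.coe_filter, Finset.mem_univ, true_and, Set.indicator_apply,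
    Set.mem_ofPred_eq, Pi.one_apply]
  generalize chiCoord f v = c
  revert c
  decide

variable [DecidableEq V] (A : Matrix V V (ZMod 2))

omit [Fintype V] in
theorem elim_iasCol_apply (o : Option GType) (v w : V) :
    o.elim 0 (fun ι => iasCol A (v, ι)) w
      = (cellVec o).1 * (if w = v then 1 else 0) + A w v * (cellVec o).2 := by
  rcases o with _ | _ | _ | _ <;> simp [cellVec, iasCol]

theorem cycSum_eq (f : V → Option GType) : cycSum A f = phiCoord f + A *ᵥ chiCoord f := by
  funext w
  simp only [cycSum, Finset.sum_apply, elim_iasCol_apply, Finset.sum_add_distrib, mul_ite,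
    mul_one, mul_zero, Finset.sum_ite_eq, Finset.mem_univ, if_true, Pi.add_apply,
    Matrix.mulVec, dotProduct, phiCoord, chiCoord]

theorem cycSum_eq_zero_iff (f : V → Option GType) :
    cycSum A f = 0 ↔ phiCoord f = A *ᵥ chiCoord f := by
  simp only [cycSum_eq, funext_iff, Pi.add_apply, Pi.zero_apply, CharTwo.add_eq_zero]

theorem cycSum_oadd (f g : V → Option GType) :
    cycSum A (fun v => oadd (f v) (g v)) = cycSum A f + cycSum A g := by
  rw [cycSum_eq, cycSum_eq, cycSum_eq, phiCoord_oadd, chiCoord_oadd, Matrix.mulVec_add]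
  abel

theorem cellVec_transCyc (X : Finset V) (v : V) :
    cellVec (transCyc A X v) = (∑ x ∈ X, A v x, if v ∈ X then 1 else 0) := by
  have hphi : ∀ c : ZMod 2, cellVec (if c = 1 then some GType.phi else none) = (c, 0) := by
    decide
  rw [transCyc, cellVec_oadd, hphi]
  by_cases hv : v ∈ X
  · -- the `ψ`/`χ` choice supplies exactly the diagonal term missing from the sum over `X.erase v`
    have hdiag : ∀ c : ZMod 2,
        cellVec (some (if c = 1 then GType.psi else GType.chi)) = (c, 1) := by
      decide
    simp only [hv, if_true, hdiag, Prod.mk_add_mk, add_zero, Finset.add_sum_erase _ _ hv]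
  · simp [hv, cellVec]

theorem chiCoord_transCyc (X : Finset V) :
    chiCoord (transCyc A X) = Set.indicator (X : Set V) 1 := by
  funext v
  simp [chiCoord, cellVec_transCyc, Set.indicator_apply]

theorem phiCoord_transCyc (X : Finset V) :
    phiCoord (transCyc A X) = A *ᵥ Set.indicator (X : Set V) 1 := by
  funext v
  simp [phiCoord, cellVec_transCyc, Set.indicator_apply, Matrix.mulVec, dotProduct]

theorem cycSum_transCyc (X : Finset V) : cycSum A (transCyc A X) = 0 := by
  rw [cycSum_eq_zero_iff, phiCoord_transCyc, chiCoord_transCyc]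

theorem chiSupport_transCyc (X : Finset V) : chiSupport (transCyc A X) = X := by
  ext v
  simp [chiSupport, chiCoord_transCyc, Set.indicator_apply]

theorem transCyc_chiSupport {f : V → Option GType} (hf : cycSum A f = 0) :
    transCyc A (chiSupport f) = f := by
  rw [cycSum_eq_zero_iff] at hf
  apply eq_of_phiCoord_eq_of_chiCoord_eq
  · rw [phiCoord_transCyc, indicator_chiSupport, hf]
  · rw [chiCoord_transCyc, indicator_chiSupport]

end Coordinates

theorem transverse_cycles_general {V : Type} [Fintype V] [DecidableEq V]
    (A : Matrix V V (ZMod 2)) :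
    {f : V → Option GType | cycSum A f = 0} = Set.range (transCyc A) ∧
    Function.Injective (transCyc A) ∧
    (∀ f g : V → Option GType, cycSum A f = 0 → cycSum A g = 0 →
      cycSum A (fun v => oadd (f v) (g v)) = 0) := by
  refine ⟨?_, Function.LeftInverse.injective (chiSupport_transCyc A), fun f g hf hg => ?_⟩
  · ext f
    exact ⟨fun hf => ⟨chiSupport f, transCyc_chiSupport A hf⟩,
      by rintro ⟨X, rfl⟩; exact cycSum_transCyc A X⟩
  · rw [cycSum_oadd, hf, hg, add_zero]

/-- the transverse cycles of `G` (subtransversals whose columns of `IAS(G)`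
sum to zero) are exactly the subtransversals `σ(X·Ψ(G)) ⊞ σ(N(X)·Φ(G))` for `X ⊆ V(G)`;
this parametrization is bijective, and the set of transverse cycles is closed under
`⊞` (a `GF(2)`-subspace). -/
theorem transverse_cycles {V : Type} [Fintype V] [DecidableEq V]
    (A : Matrix V V (ZMod 2)) (hA : A.IsSymm) :
    {f : V → Option GType | cycSum A f = 0} = Set.range (transCyc A) ∧
    Function.Injective (transCyc A) ∧
    (∀ f g : V → Option GType, cycSum A f = 0 → cycSum A g = 0 →
      cycSum A (fun v => oadd (f v) (g v)) = 0) :=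
  transverse_cycles_general A
end

section
/- Let G be a looped simple graph with adjacency matrix A over GF(2), and for S ⊆ V(G) let A[S] denote the principal submatrix on S. For a transversal T of W(G) with no ψ-elements, letting S(T) = {v : (v,χ) ∈ T}, the GF(2)-rank of the columns of IAS(G) indexed by T equals |V(G)| − |S(T)| + rank(A[S(T)]). Consequently, setting D(G) = {S ⊆ V(G) : A[S] is nonsingular}, a subset S belongs to D(G) if and only if {(v,χ) : v∈S} ∪ {(v,φ) : v∉S} is a basis of M(IAS(G)). -/
/-- The transversal `T_S = {(v,χ) : v ∈ S} ∪ {(v,φ) : v ∉ S}` of `W(G)` (a transversal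
with no `ψ`-elements). -/
def chiPhiTransversal {V : Type} (S : Finset V) : Set (V × GType) :=
  {p | (p.2 = GType.chi ∧ p.1 ∈ S) ∨ (p.2 = GType.phi ∧ p.1 ∉ S)}

/-!
Restrict vectors to the coordinates in `S`. The kernel of this projection consists of the
vectors supported off `S`, which are spanned by the unit columns `(v, φ)`, `v ∉ S`; so it lies
in the span `N` of the columns of `T_S` and has dimension `|V| − |S|`. The image of `N` is
spanned by the columns of `A[S]`, so rank–nullity on `N` gives `dim N = |V| − |S| + rank A[S]`.
As `T_S` has `|V|` elements, it is a basis exactly when `dim N = |V|`, i.e. when `A[S]` has full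
rank.
-/

/-- The columns of `IAS(G)` indexed by `T_S`, with `GF(2)` generalized to any field. -/
def chiPhiCols {V K : Type*} [DecidableEq V] [Zero K] [One K] (A : Matrix V V K) (S : Finset V) :
    V → V → K :=
  fun v => if v ∈ S then A.col v else Pi.single v 1

theorem Submodule.finrank_eq_finrank_map_add_finrank_ker {K M N : Type*} [Field K]
    [AddCommGroup M] [Module K M] [FiniteDimensional K M] [AddCommGroup N] [Module K N]
    {f : M →ₗ[K] N} {p : Submodule K M} (h : LinearMap.ker f ≤ p) :
    Module.finrank K p = Module.finrank K (p.map f) + Module.finrank K (LinearMap.ker f) := by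
  rw [← (f.domRestrict p).finrank_range_add_finrank_ker, LinearMap.range_domRestrict,
    LinearMap.ker_domRestrict, (Submodule.comapSubtypeEquivOfLe h).finrank_eq]

theorem Matrix.isUnit_det_iff_rank_eq_card {n K : Type*} [Fintype n] [DecidableEq n] [Field K]
    (A : Matrix n n K) : IsUnit A.det ↔ A.rank = Fintype.card n := by
  rw [← Matrix.isUnit_iff_isUnit_det, ← Matrix.linearIndependent_cols_iff_isUnit,
    linearIndependent_iff_card_eq_finrank_span, Matrix.rank_eq_finrank_span_cols, eq_comm]
  rfl

section RankFormula

variable {V K : Type*} [Field K] (S : Finset V)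

abbrev restrictCoords : (V → K) →ₗ[K] (S → K) := LinearMap.funLeft K K Subtype.val

theorem finrank_ker_restrictCoords_add_card [Fintype V] :
    Module.finrank K (LinearMap.ker (restrictCoords (K := K) S)) + S.card = Fintype.card V := by
  have hrange : LinearMap.range (restrictCoords (K := K) S) = ⊤ :=
    LinearMap.range_eq_top.mpr (LinearMap.funLeft_surjective_of_injective _ _ _
      Subtype.val_injective)
  have := (restrictCoords (K := K) S).finrank_range_add_finrank_ker
  rw [hrange, finrank_top, Module.finrank_fintype_fun_eq_card, Module.finrank_fintype_fun_eq_card,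
    Fintype.card_coe] at this
  omega

variable [DecidableEq V] (A : Matrix V V K)

theorem ker_restrictCoords_le_span_chiPhiCols [Fintype V] :
    LinearMap.ker (restrictCoords S) ≤ Submodule.span K (Set.range (chiPhiCols A S)) := by
  intro g hg
  have hgS : ∀ w ∈ S, g w = 0 := fun w hw => congrFun hg ⟨w, hw⟩
  rw [← Finset.univ_sum_single g]
  refine Submodule.sum_mem _ fun w _ => ?_
  by_cases hw : w ∈ S
  · simp [hgS w hw]
  · have hcol : chiPhiCols A S w = Pi.single w 1 := if_neg hw
    rw [← mul_one (g w), ← smul_eq_mul, Pi.single_smul, ← hcol]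
    exact Submodule.smul_mem _ _ (Submodule.subset_span ⟨w, rfl⟩)

theorem map_restrictCoords_span_chiPhiCols :
    (Submodule.span K (Set.range (chiPhiCols A S))).map (restrictCoords S) =
      Submodule.span K (Set.range (A.submatrix (fun a : S => a.val) (fun a : S => a.val)).col) := by
  rw [Submodule.map_span, ← Set.range_comp]
  apply le_antisymm <;> rw [Submodule.span_le]
  · rintro _ ⟨v, rfl⟩
    by_cases hv : v ∈ S
    · exact Submodule.subset_span ⟨⟨v, hv⟩, by ext a; simp [chiPhiCols, hv]⟩
    · have hzero : restrictCoords S (chiPhiCols A S v) = 0 := by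
        ext a
        have : a.val ≠ v := fun h => hv (h ▸ a.prop)
        simp [chiPhiCols, hv, this]
      simp [hzero]
  · rintro _ ⟨b, rfl⟩
    exact Submodule.subset_span ⟨b.val, by ext a; simp [chiPhiCols, b.prop]⟩

theorem finrank_span_chiPhiCols_add_card [Fintype V] :
    Module.finrank K (Submodule.span K (Set.range (chiPhiCols A S))) + S.card =
      Fintype.card V + (A.submatrix (fun a : S => a.val) (fun a : S => a.val)).rank := by
  rw [Submodule.finrank_eq_finrank_map_add_finrank_ker (ker_restrictCoords_le_span_chiPhiCols S A),
    map_restrictCoords_span_chiPhiCols, ← Matrix.rank_eq_finrank_span_cols, add_assoc,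
    finrank_ker_restrictCoords_add_card, add_comm]

end RankFormula

section IAS

variable {V : Type} [DecidableEq V]

theorem chiPhiTransversal_eq_range (S : Finset V) :
    chiPhiTransversal S = Set.range fun v => (v, if v ∈ S then GType.chi else GType.phi) := by
  ext ⟨v, t⟩
  by_cases hv : v ∈ S <;> cases t <;> simp [chiPhiTransversal, hv]

theorem ncard_chiPhiTransversal [Fintype V] (S : Finset V) :
    (chiPhiTransversal S).ncard = Fintype.card V := by
  rw [chiPhiTransversal_eq_range, Set.ncard_range_of_injective, Nat.card_eq_fintype_card]
  intro v w h
  exact congrArg Prod.fst h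

theorem iasCol_image_chiPhiTransversal (A : Matrix V V (ZMod 2)) (S : Finset V) :
    iasCol A '' chiPhiTransversal S = Set.range (chiPhiCols A S) := by
  rw [chiPhiTransversal_eq_range, ← Set.range_comp]
  congr 1
  ext v w
  by_cases hv : v ∈ S <;> simp [iasCol, chiPhiCols, hv, Pi.single_apply]

variable [Fintype V] (A : Matrix V V (ZMod 2))

theorem iasIndep_iff_iasRk_eq_ncard (T : Set (V × GType)) :
    IasIndep A T ↔ iasRk A T = T.ncard := by
  have : Fintype T := Fintype.ofFinite T
  rw [IasIndep, linearIndependent_iff_card_eq_finrank_span, Fintype.card_eq_nat_card,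
    Nat.card_coe_set_eq, eq_comm, iasRk, Set.image_eq_range]
  rfl

theorem span_iasCol_eq_top_iff (T : Set (V × GType)) :
    Submodule.span (ZMod 2) (iasCol A '' T) = ⊤ ↔ iasRk A T = Fintype.card V := by
  rw [Submodule.eq_top_iff_finrank_eq, Module.finrank_fintype_fun_eq_card, iasRk]

theorem iasIndep_and_span_eq_top_iff {T : Set (V × GType)} (hT : T.ncard = Fintype.card V) :
    IasIndep A T ∧ Submodule.span (ZMod 2) (iasCol A '' T) = ⊤ ↔ iasRk A T = Fintype.card V := by
  rw [iasIndep_iff_iasRk_eq_ncard, span_iasCol_eq_top_iff, hT, and_self]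

end IAS

theorem delta_matroid_from_isotropic_general {V : Type} [Fintype V] [DecidableEq V]
    (A : Matrix V V (ZMod 2)) :
    ∀ S : Finset V,
      (iasRk A (chiPhiTransversal S) + S.card =
          Fintype.card V +
            (A.submatrix (fun a : {a : V // a ∈ S} => a.val) (fun a : {a : V // a ∈ S} => a.val)).rank) ∧
      (IsUnit (A.submatrix (fun a : {a : V // a ∈ S} => a.val) (fun a : {a : V // a ∈ S} => a.val)).det ↔
        (IasIndep A (chiPhiTransversal S) ∧
          Submodule.span (ZMod 2) (iasCol A '' chiPhiTransversal S) = ⊤)) := by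
  intro S
  have hrank : iasRk A (chiPhiTransversal S) + S.card = Fintype.card V +
      (A.submatrix (fun a : S => a.val) (fun a : S => a.val)).rank := by
    rw [iasRk, iasCol_image_chiPhiTransversal]
    exact finrank_span_chiPhiCols_add_card S A
  refine ⟨hrank, ?_⟩
  rw [Matrix.isUnit_det_iff_rank_eq_card, Fintype.card_coe,
    iasIndep_and_span_eq_top_iff A (ncard_chiPhiTransversal S)]
  omega

/-- for every `S ⊆ V(G)`, the `GF(2)`-rank of the columns of `IAS(G)`
indexed by `T_S` equals `|V| − |S| + rank A[S]` (stated additively), and consequently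
`A[S]` is nonsingular iff `T_S = {(v,χ) : v∈S} ∪ {(v,φ) : v∉S}` is a basis of
`M(IAS(G))` (independent and spanning). -/
theorem delta_matroid_from_isotropic {V : Type} [Fintype V] [DecidableEq V]
    (A : Matrix V V (ZMod 2)) (hA : A.IsSymm) :
    ∀ S : Finset V,
      (iasRk A (chiPhiTransversal S) + S.card =
          Fintype.card V +
            (A.submatrix (fun a : {a : V // a ∈ S} => a.val) (fun a : {a : V // a ∈ S} => a.val)).rank) ∧
      (IsUnit (A.submatrix (fun a : {a : V // a ∈ S} => a.val) (fun a : {a : V // a ∈ S} => a.val)).det ↔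
        (IasIndep A (chiPhiTransversal S) ∧
          Submodule.span (ZMod 2) (iasCol A '' chiPhiTransversal S) = ⊤)) :=
  delta_matroid_from_isotropic_general A
end
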